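/- Σ_{n=1}^∞ (-1)^{n-1} / ((2n−1)·2n·(2n+1)(2n+2)(2n+3)) = (10 − 3π)/72. -/
import Mathlib


open Real Filter Finset

noncomputable def T (n : ℕ) : ℝ := (-1 : ℝ) ^ n /
    ((2 * (n : ℝ) + 1) * (2 * (n : ℝ) + 2) * (2 * (n : ℝ) + 3) * (2 * (n : ℝ) + 4) *
      (2 * (n : ℝ) + 5))

noncomputable def F (N : ℕ) : ℝ := ∑ i ∈ range N, (-1 : ℝ) ^ i / (2 * i + 1)

lemma partial_sum_eq (N : ℕ) :
    ∑ n ∈ range N, T n =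
      (1/24) * F N - (1/4) * F (N+1) + (1/24) * F (N+2)
        + (1/6) * ((-1:ℝ)^N / (2*N+2)) + 5/36 := by
  induction N with
  | zero => simp [F, Finset.sum_range_succ]; norm_num
  | succ N ih =>
      rw [Finset.sum_range_succ, ih]
      show _ = (1/24) * F (N+1) - (1/4) * F (N+2) + (1/24) * F (N+3) + _ + 5/36
      have hF1 : F (N+1) = F N + (-1:ℝ)^N / (2*N+1) := Finset.sum_range_succ _ N
      have hF2 : F (N+2) = F (N+1) + (-1:ℝ)^(N+1) / (2*((N+1 : ℕ) : ℝ)+1) := Finset.sum_range_succ _ (N+1)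
      have hF3 : F (N+3) = F (N+2) + (-1:ℝ)^(N+2) / (2*((N+2 : ℕ) : ℝ)+1) := Finset.sum_range_succ _ (N+2)
      have h1 : (2*(N:ℝ)+1) ≠ 0 := by positivity
      have h2 : (2*(N:ℝ)+2) ≠ 0 := by positivity
      have h3 : (2*(N:ℝ)+3) ≠ 0 := by positivity
      have h4 : (2*(N:ℝ)+4) ≠ 0 := by positivity
      have h5 : (2*(N:ℝ)+5) ≠ 0 := by positivity
      simp only [T, hF3, hF2, hF1, pow_succ, Nat.cast_succ]
      push_cast
      field_simp
      ring

lemma summable_T : Summable T := by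
  apply Summable.of_norm
  have h : Summable (fun n : ℕ => 1 / ((n:ℝ)+1)^2) := by
    have := (summable_nat_add_iff (f := fun n : ℕ => 1 / (n:ℝ)^2) 1).2
      (Real.summable_one_div_nat_pow.2 one_lt_two)
    simpa using this
  apply h.of_nonneg_of_le (fun n => norm_nonneg _)
  intro n
  have h1 : (0:ℝ) < 2*(n:ℝ)+1 := by positivity
  have h2 : (0:ℝ) < 2*(n:ℝ)+2 := by positivity
  have h3 : (0:ℝ) < 2*(n:ℝ)+3 := by positivity
  have h4 : (0:ℝ) < 2*(n:ℝ)+4 := by positivity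
  have h5 : (0:ℝ) < 2*(n:ℝ)+5 := by positivity
  have : ‖T n‖ = 1 / ((2*(n:ℝ)+1)*(2*(n:ℝ)+2)*(2*(n:ℝ)+3)*(2*(n:ℝ)+4)*(2*(n:ℝ)+5)) := by
    rw [T, norm_div, norm_pow, norm_neg, norm_one, one_pow]
    rw [Real.norm_eq_abs, abs_of_pos (by positivity)]
  rw [this]
  apply one_div_le_one_div_of_le (by positivity)
  have hn : (0:ℝ) ≤ (n:ℝ) := n.cast_nonneg
  calc ((n:ℝ)+1)^2 ≤ (2*(n:ℝ)+1)*(2*(n:ℝ)+2) := by nlinarith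
    _ ≤ ((2*(n:ℝ)+1)*(2*(n:ℝ)+2)) * ((2*(n:ℝ)+3)*((2*(n:ℝ)+4)*(2*(n:ℝ)+5))) :=
        le_mul_of_one_le_right (by positivity) (by nlinarith [mul_nonneg hn hn, mul_nonneg (mul_nonneg hn hn) hn])
    _ = (2*(n:ℝ)+1)*(2*(n:ℝ)+2)*(2*(n:ℝ)+3)*(2*(n:ℝ)+4)*(2*(n:ℝ)+5) := by ring

/-- Σ_{n=1}^∞ (-1)^{n-1} / ((2n−1)·2n·(2n+1)(2n+2)(2n+3)) = (10 − 3π)/72.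
(The summation index is shifted: `n : ℕ` here corresponds to `n + 1` in the statement.) -/
theorem sum_alt_five_consecutive_factors :
    ∑' n : ℕ, (-1 : ℝ) ^ n /
        ((2 * (n : ℝ) + 1) * (2 * (n : ℝ) + 2) * (2 * (n : ℝ) + 3) * (2 * (n : ℝ) + 4) *
          (2 * (n : ℝ) + 5)) =
      (10 - 3 * π) / 72 := by
  have hsum := summable_T.hasSum.tendsto_sum_nat
  have hπ : Filter.Tendsto F atTop (nhds (π/4)) := Real.tendsto_sum_pi_div_four
  have hπ1 : Filter.Tendsto (fun N => F (N+1)) atTop (nhds (π/4)) :=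
    hπ.comp (tendsto_add_atTop_nat 1)
  have hπ2 : Filter.Tendsto (fun N => F (N+2)) atTop (nhds (π/4)) :=
    hπ.comp (tendsto_add_atTop_nat 2)
  have h0 : Filter.Tendsto (fun N : ℕ => (-1:ℝ)^N / (2*N+2)) atTop (nhds 0) := by
    apply squeeze_zero_norm _ tendsto_one_div_add_atTop_nhds_zero_nat
    intro n
    rw [norm_div, norm_pow, norm_neg, norm_one, one_pow, Real.norm_eq_abs,
      abs_of_pos (by positivity)]
    apply one_div_le_one_div_of_le (by positivity)
    have hn : (0:ℝ) ≤ (n:ℝ) := n.cast_nonneg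
    linarith
  have hcomb : Filter.Tendsto
      (fun N => (1/24) * F N - (1/4) * F (N+1) + (1/24) * F (N+2)
        + (1/6) * ((-1:ℝ)^N / (2*N+2)) + 5/36) atTop
      (nhds ((1/24)*(π/4) - (1/4)*(π/4) + (1/24)*(π/4) + (1/6)*0 + 5/36)) :=
    ((((hπ.const_mul _).sub (hπ1.const_mul _)).add (hπ2.const_mul _)).add
      (h0.const_mul _)).add_const _
  have h2 : Filter.Tendsto (fun N => ∑ n ∈ Finset.range N, T n) atTop
      (nhds ((1/24)*(π/4) - (1/4)*(π/4) + (1/24)*(π/4) + (1/6)*0 + 5/36)) :=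
    hcomb.congr (fun N => (partial_sum_eq N).symm)
  have hval := tendsto_nhds_unique hsum h2
  show (∑' n, T n) = _
  rw [hval]; ring
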